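/- Let r ≥ 2 and n ≥ r − 1, and let F be a homogeneous polynomial of degree n+2 in r real variables such that every iterated partial derivative of F of order ≤ n (including F itself) vanishes at every point of the affine cone of the rational normal curve, i.e., at every point (s^{r−1}, s^{r−2}t, …, t^{r−1}) ∈ ℝ^r with s,t ∈ ℝ. Then F is identically zero. (This expresses that the symbol algebra is of finite type: since the rational normal curve is nondegenerate, its n-th secant variety fills the whole projective space for n ≥ r−1, so the corresponding prolongation spaces vanish.) -/

import Mathlib

/-!
Write `D_v = ∑ vᵢ ∂ᵢ`. For `F` homogeneous of degree `d`, Euler's identity gives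
`D_x^d F = d! F(x)`, so it suffices that `D_x^(n+2) F = 0` for every `x`. The points
`b_j = (1, j, …, j^(r-1))` of the cone span `ℝ^r` (Vandermonde); writing `x = ∑ c_j b_j` and
expanding, `D_x^(n+2) F` is a combination of `D_{b_{j₁}} ⋯ D_{b_{j_{n+2}}} F`, and as `n + 2 > r`
some `b_a` occurs twice. The remaining `n` derivatives turn `F` into a quadratic form `G` that
vanishes at `b_a` (it is a combination of order-`n` partials of `F`), hence
`D_{b_a}^2 G = 2 G(b_a) = 0`.
-/

open scoped Nat

namespace MvPolynomial

variable {σ R : Type*} [CommRing R]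

theorem pderiv_pderiv_comm (i j : σ) (p : MvPolynomial σ R) :
    pderiv i (pderiv j p) = pderiv j (pderiv i p) := by
  classical
  have h : ⁅pderiv i, pderiv j⁆ = (0 : Derivation R (MvPolynomial σ R) (MvPolynomial σ R)) :=
    derivation_ext fun k => by
      rw [Derivation.commutator_apply]
      simp [pderiv_X, Pi.single_apply, apply_ite]
  simpa [Derivation.commutator_apply, sub_eq_zero] using DFunLike.congr_fun h p

variable [Fintype σ]

noncomputable def dirDeriv : (σ → R) →ₗ[R] Module.End R (MvPolynomial σ R) :=
  Fintype.linearCombination R fun i => (pderiv i).toLinearMap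

theorem dirDeriv_apply (v : σ → R) (p : MvPolynomial σ R) :
    dirDeriv v p = ∑ i, v i • pderiv i p := by
  simp [dirDeriv, Fintype.linearCombination_apply]

theorem commute_dirDeriv (u v : σ → R) : Commute (dirDeriv u) (dirDeriv v) := by
  simp only [dirDeriv, Fintype.linearCombination_apply]
  refine Commute.sum_left _ _ _ fun i _ => Commute.sum_right _ _ _ fun j _ => ?_
  refine (Commute.smul_left ?_ _).smul_right _
  exact LinearMap.ext fun p => pderiv_pderiv_comm i j p

variable {p : MvPolynomial σ R} {n : ℕ}

theorem isHomogeneous_dirDeriv (h : p.IsHomogeneous n) (v : σ → R) :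
    (dirDeriv v p).IsHomogeneous (n - 1) := by
  rw [dirDeriv_apply]
  exact IsHomogeneous.sum _ _ _ fun i _ => (homogeneousSubmodule σ R _).smul_mem _ h.pderiv

theorem IsHomogeneous.prod_dirDeriv (h : p.IsHomogeneous n) (vs : List (σ → R)) :
    ((vs.map dirDeriv).prod p).IsHomogeneous (n - vs.length) := by
  induction vs with
  | nil => simpa using h
  | cons v vs ih => simpa [Nat.sub_add_eq] using isHomogeneous_dirDeriv ih v

theorem IsHomogeneous.eval_dirDeriv_self (h : p.IsHomogeneous n) (x : σ → R) :
    eval x (dirDeriv x p) = n * eval x p := by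
  calc eval x (dirDeriv x p) = eval x (∑ i, X i * pderiv i p) := by
        simp [dirDeriv_apply, smul_eq_C_mul]
    _ = n * eval x p := by simp [h.sum_X_mul_pderiv]

theorem IsHomogeneous.eval_dirDeriv_self_pow (h : p.IsHomogeneous n) (x : σ → R) :
    eval x ((dirDeriv x ^ n) p) = n ! * eval x p := by
  induction n generalizing p with
  | zero => simp
  | succ n ih =>
    rw [pow_succ, Module.End.mul_apply, ih (by simpa using isHomogeneous_dirDeriv h x),
      h.eval_dirDeriv_self, Nat.factorial_succ]
    push_cast
    ring

theorem IsHomogeneous.dirDeriv_self_pow (h : p.IsHomogeneous n) (x : σ → R) :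
    (dirDeriv x ^ n) p = C (n ! * eval x p) := by
  set q := (dirDeriv x ^ n) p
  have hq : q = C (coeff 0 q) := totalDegree_eq_zero_iff_eq_C.mp <|
    (totalDegree_zero_iff_isHomogeneous σ).mpr <| by simpa using h.prod_dirDeriv (.replicate n x)
  have hval : eval x q = n ! * eval x p := h.eval_dirDeriv_self_pow x
  rw [hq, eval_C] at hval
  rw [hq, hval]

/- The induction runs over `ℓ` as well: the outermost `D_v` becomes `∑ vᵢ ∂ᵢ`, and each `∂ᵢ`
is absorbed into `ℓ ∘ ∂ᵢ`. -/
theorem apply_prod_dirDeriv_eq_zero {M : Type*} [AddCommMonoid M] [Module R M]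
    (ℓ : MvPolynomial σ R →ₗ[R] M) (vs : List (σ → R))
    (h : ∀ L : List σ, L.length = vs.length → ℓ (L.foldr (fun i q => pderiv i q) p) = 0) :
    ℓ ((vs.map dirDeriv).prod p) = 0 := by
  induction vs generalizing ℓ with
  | nil => simpa using h [] rfl
  | cons v vs ih =>
    rw [List.map_cons, List.prod_cons, Module.End.mul_apply, dirDeriv_apply, map_sum]
    refine Finset.sum_eq_zero fun i _ => ?_
    rw [map_smul, show ℓ (pderiv i _) = 0 from
      ih (ℓ ∘ₗ (pderiv i).toLinearMap) fun L hL => h (i :: L) (by simp [hL]), smul_zero]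

theorem IsHomogeneous.prod_dirDeriv_eq_zero_of_not_nodup (hF : p.IsHomogeneous (n + 2))
    {vs : List (σ → R)}
    (hvan : ∀ v ∈ vs, ∀ L : List σ, L.length = n →
      eval v (L.foldr (fun i q => pderiv i q) p) = 0)
    (hlen : vs.length = n + 2) (hdup : ¬ vs.Nodup) :
    (vs.map dirDeriv).prod p = 0 := by
  obtain ⟨a, ha⟩ : ∃ a, List.Duplicate a vs := by
    simpa [List.nodup_iff_forall_not_duplicate] using hdup
  obtain ⟨rest, hperm⟩ := (List.duplicate_iff_sublist.mp ha).exists_perm_append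
  have hrest : rest.length = n := by
    have := hperm.length_eq
    simp only [List.length_append, List.length_cons, List.length_nil] at this
    omega
  set G := (rest.map dirDeriv).prod p
  have hG : G.IsHomogeneous 2 := by simpa [hrest] using hF.prod_dirDeriv rest
  have hGa : eval a G = 0 := by
    rw [← coe_aeval_eq_eval]
    refine apply_prod_dirDeriv_eq_zero (MvPolynomial.aeval a).toLinearMap rest fun L hL => ?_
    simpa using hvan a ha.mem L (hL.trans hrest)
  calc (vs.map dirDeriv).prod p
      = (dirDeriv a ^ 2) G := by
        rw [(hperm.map _).prod_eq'
          (List.pairwise_map.mpr (List.pairwise_of_forall fun _ _ => commute_dirDeriv _ _))]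
        simp [G, pow_two]
    _ = 0 := by rw [hG.dirDeriv_self_pow a, hGa, mul_zero, map_zero]

theorem dirDeriv_sum_pow_apply_eq_zero {ι : Type*} [Fintype ι] (b : ι → σ → R) (c : ι → R)
    (m : ℕ) (h : ∀ js : List ι, js.length = m → ((js.map b).map dirDeriv).prod p = 0) :
    (dirDeriv (∑ j, c j • b j) ^ m) p = 0 := by
  induction m generalizing p with
  | zero => simpa using h [] rfl
  | succ m ih =>
    have hsum : dirDeriv (∑ j, c j • b j) p = ∑ j, c j • dirDeriv (b j) p := by
      simp only [map_sum, map_smul, LinearMap.sum_apply, LinearMap.smul_apply]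
    rw [pow_succ, Module.End.mul_apply, hsum, map_sum]
    refine Finset.sum_eq_zero fun j _ => ?_
    rw [map_smul, ih fun js hjs => by simpa using h (js ++ [j]) (by simp [hjs]), smul_zero]

theorem IsHomogeneous.eq_zero_of_eval_pderiv_eq_zero {K : Type*} [Field K] [CharZero K]
    {F : MvPolynomial σ K} (hF : F.IsHomogeneous (n + 2)) {ι : Type*} [Fintype ι]
    (b : ι → σ → K) (hcard : Fintype.card ι ≤ n + 1) (hb : Submodule.span K (Set.range b) = ⊤)
    (hvan : ∀ j, ∀ L : List σ, L.length = n →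
      eval (b j) (L.foldr (fun i q => pderiv i q) F) = 0) :
    F = 0 := by
  have hdiag (x : σ → K) : (dirDeriv x ^ (n + 2)) F = 0 := by
    have hx : x ∈ Submodule.span K (Set.range b) := hb ▸ Submodule.mem_top
    obtain ⟨c, rfl⟩ := (Submodule.mem_span_range_iff_exists_fun K).mp hx
    refine dirDeriv_sum_pow_apply_eq_zero b c _ fun js hjs =>
      hF.prod_dirDeriv_eq_zero_of_not_nodup (fun v hv => ?_) (by simpa using hjs) fun hnd => ?_
    · obtain ⟨j, -, rfl⟩ := List.mem_map.mp hv
      exact hvan j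
    · have := (hnd.of_map b).length_le_card
      omega
  refine MvPolynomial.funext fun x => ?_
  have := hF.dirDeriv_self_pow x
  rw [hdiag x, eq_comm, C_eq_zero, mul_eq_zero] at this
  simpa [Nat.factorial_ne_zero] using this

end MvPolynomial

open Matrix in
theorem span_range_pow_eq_top {K : Type*} [Field K] {r : ℕ} {v : Fin r → K}
    (hv : Function.Injective v) :
    Submodule.span K (Set.range fun j (i : Fin r) => v j ^ (i : ℕ)) = ⊤ := by
  refine Submodule.eq_top_iff'.mpr fun x => ?_
  obtain ⟨c, hc⟩ := vecMul_surjective_iff_isUnit.mpr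
    ((isUnit_iff_isUnit_det _).mpr (det_vandermonde_ne_zero_iff.mpr hv).isUnit) x
  exact (Submodule.mem_span_range_iff_exists_fun K).mpr ⟨c, hc ▸ (vecMul_eq_sum c _).symm⟩

theorem stmt_10_general (r n : ℕ) (hn : r - 1 ≤ n)
    (F : MvPolynomial (Fin r) ℝ) (hF : F.IsHomogeneous (n + 2))
    (hvan : ∀ L : List (Fin r), L.length ≤ n → ∀ s t : ℝ,
      MvPolynomial.eval (fun i : Fin r => s ^ (r - 1 - (i : ℕ)) * t ^ (i : ℕ))
        (L.foldr (fun v Q => MvPolynomial.pderiv v Q) F) = 0) :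
    F = 0 :=
  hF.eq_zero_of_eval_pderiv_eq_zero (fun j i : Fin r => ((j : ℕ) : ℝ) ^ (i : ℕ))
    (by rw [Fintype.card_fin]; omega)
    (span_range_pow_eq_top (Nat.cast_injective.comp Fin.val_injective))
    fun j L hL => by simpa using hvan L hL.le 1 j

/-- (Finite type.)  Let `r ≥ 2` and `n ≥ r − 1`.  If all iterated
partial derivatives of order ≤ n (including the polynomial itself) of a homogeneous
polynomial `F` of degree `n + 2` in `r` variables vanish on the affine cone of the
rational normal curve, then `F = 0`. -/
theorem stmt_10 (r n : ℕ) (hr : 2 ≤ r) (hn : r - 1 ≤ n)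
    (F : MvPolynomial (Fin r) ℝ) (hF : F.IsHomogeneous (n + 2))
    (hvan : ∀ L : List (Fin r), L.length ≤ n → ∀ s t : ℝ,
      MvPolynomial.eval (fun i : Fin r => s ^ (r - 1 - (i : ℕ)) * t ^ (i : ℕ))
        (L.foldr (fun v Q => MvPolynomial.pderiv v Q) F) = 0) :
    F = 0 :=
  stmt_10_general r n hn F hF hvan
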